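/- Let ξ = (ξ_n)_{n∈ℕ} be a sequence in H such that D(C_ξ) is dense in H. If the operator Q_ξ is closed, then T_ξ = W_ξ (equality of operators, including domains). -/

import Mathlib

noncomputable section
open scoped InnerProductSpace ComplexInnerProductSpace ComplexConjugate ENNReal
open Filter Topology

/- `H` is a separable complex Hilbert space. -/
variable {H : Type} [NormedAddCommGroup H] [InnerProductSpace ℂ H] [CompleteSpace H]
  [TopologicalSpace.SeparableSpace H]

/-- The space `ℓ²(ℕ)` of square-summable complex sequences. -/
abbrev l2 : Type := lp (fun _ : ℕ => ℂ) 2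

/-- The domain of the analysis operator `C_ξ`:
`D(C_ξ) = {f ∈ H : Σ_n |⟨f,ξ_n⟩|² < ∞}`.  (The paper's inner product `⟨f,ξ_n⟩`, linear in `f`,
is `⟪ξ n, f⟫_ℂ` in Mathlib's convention.) -/
def domC (ξ : ℕ → H) : Set H := {f : H | Memℓp (fun n => ⟪ξ n, f⟫_ℂ) 2}

open Classical in
/-- The analysis operator `C_ξ f = (⟨f,ξ_n⟩)_n`, with junk value `0` outside of its domain. -/
def Cfun (ξ : ℕ → H) (f : H) : l2 :=
  if h : Memℓp (fun n => ⟪ξ n, f⟫_ℂ) 2 then ⟨_, h⟩ else 0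

/-- The domain of the synthesis operator `D_ξ`:
`D(D_ξ) = {(c_n) ∈ ℓ² : Σ_n c_n ξ_n converges in norm in H}`. -/
def domD (ξ : ℕ → H) : Set l2 :=
  {c : l2 | ∃ L : H, Tendsto (fun k : ℕ => ∑ n ∈ Finset.range k, c n • ξ n) atTop (𝓝 L)}

/-- The domain of the frame operator `S_ξ`:
`D(S_ξ) = {f ∈ H : Σ_n ⟨f,ξ_n⟩ ξ_n converges in norm in H}`. -/
def domS (ξ : ℕ → H) : Set H :=
  {f : H | ∃ L : H, Tendsto (fun k : ℕ => ∑ n ∈ Finset.range k, ⟪ξ n, f⟫_ℂ • ξ n) atTop (𝓝 L)}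

/-- The domain of the generalized frame operator `T_ξ`: those `f ∈ D(C_ξ)` for which there is
`h` in `H_ξ = closure D(C_ξ)` with `Σ_n ⟨f,ξ_n⟩⟨ξ_n,g⟩ = ⟨h,g⟩` for all `g ∈ D(C_ξ)`. -/
def domT (ξ : ℕ → H) : Set H :=
  {f : H | f ∈ domC ξ ∧ ∃ h ∈ closure (domC ξ), ∀ g ∈ domC ξ,
    ∑' n : ℕ, ⟪ξ n, f⟫_ℂ * ⟪g, ξ n⟫_ℂ = ⟪g, h⟫_ℂ}

/-- The domain of `Q_ξ`: those `(c_n) ∈ ℓ²` whose partial sums `Σ_{n<k} c_n ξ_n`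
converge weakly in `H`. -/
def domQ (ξ : ℕ → H) : Set l2 :=
  {c : l2 | ∃ L : H, ∀ y : H,
    Tendsto (fun k : ℕ => ⟪y, ∑ n ∈ Finset.range k, c n • ξ n⟫_ℂ) atTop (𝓝 ⟪y, L⟫_ℂ)}

/-- The domain of the weak frame operator `W_ξ`: those `f ∈ H` whose partial sums
`Σ_{n<k} ⟨f,ξ_n⟩ ξ_n` converge weakly in `H`. -/
def domW (ξ : ℕ → H) : Set H :=
  {f : H | ∃ L : H, ∀ y : H,
    Tendsto (fun k : ℕ => ⟪y, ∑ n ∈ Finset.range k, ⟪ξ n, f⟫_ℂ • ξ n⟫_ℂ) atTop (𝓝 ⟪y, L⟫_ℂ)}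

/-!
The graph `G` of `Q_ξ` is a closed subspace of the Hilbert space `ℓ² ⊕ H`, so `G = Gᗮᗮ`.
Testing `(a, b) ∈ Gᗮ` against `(e_m, ξ_m) ∈ G` gives `a = -C_ξ b`, in particular `b ∈ D(C_ξ)`;
for `f ∈ D(T_ξ)` the identity defining `T_ξ f`, taken at `g = b`, then says exactly that
`(C_ξ f, T_ξ f)` is orthogonal to `(a, b)`. Hence `(C_ξ f, T_ξ f) ∈ G`, i.e. `Σ ⟨f,ξ_n⟩ ξ_n`
converges weakly to `T_ξ f`. Conversely, if the frame series of `f` converges weakly, testing it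
against `f` shows `Σ |⟨f,ξ_n⟩|² < ∞`, and testing against `g ∈ D(C_ξ)` gives the identity
defining `T_ξ`; density of `D(C_ξ)` makes the closure condition void.
-/

section WeakSum

variable (𝕜 : Type*) {E : Type*} [RCLike 𝕜] [NormedAddCommGroup E] [InnerProductSpace 𝕜 E]

def HasWeakSum (x : ℕ → E) (L : E) : Prop :=
  ∀ y : E, Tendsto (fun k => ⟪y, ∑ n ∈ Finset.range k, x n⟫_𝕜) atTop (𝓝 ⟪y, L⟫_𝕜)

variable {𝕜} {x x' : ℕ → E} {L L' : E}

theorem HasWeakSum.unique (h : HasWeakSum 𝕜 x L) (h' : HasWeakSum 𝕜 x L') : L = L' :=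
  ext_inner_left 𝕜 fun y => tendsto_nhds_unique (h y) (h' y)

theorem HasWeakSum.of_tendsto (h : Tendsto (fun k => ∑ n ∈ Finset.range k, x n) atTop (𝓝 L)) :
    HasWeakSum 𝕜 x L :=
  fun _ => ((continuous_const.inner continuous_id).tendsto L).comp h

theorem HasWeakSum.add (h : HasWeakSum 𝕜 x L) (h' : HasWeakSum 𝕜 x' L') :
    HasWeakSum 𝕜 (fun n => x n + x' n) (L + L') := fun y => by
  simpa only [Finset.sum_add_distrib, inner_add_right] using (h y).add (h' y)

theorem HasWeakSum.const_smul (r : 𝕜) (h : HasWeakSum 𝕜 x L) :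
    HasWeakSum 𝕜 (fun n => r • x n) (r • L) := fun y => by
  simpa only [← Finset.smul_sum, inner_smul_right] using (h y).const_mul r

end WeakSum

section Synthesis

variable {E : Type} [NormedAddCommGroup E] [InnerProductSpace ℂ E] {ξ : ℕ → E}

/-- The graph of `Q_ξ`; `WithLp 2` gives `ℓ² × E` its Hilbert space structure. -/
def synthesisGraph (ξ : ℕ → E) : Submodule ℂ (WithLp 2 (l2 × E)) where
  carrier := {p | HasWeakSum ℂ (fun n => p.fst n • ξ n) p.snd}
  add_mem' {p q} hp hq := by
    simpa only [Set.mem_ofPred_eq, WithLp.add_fst, WithLp.add_snd, lp.coeFn_add, Pi.add_apply,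
      add_smul] using hp.add hq
  zero_mem' := by
    simpa using HasWeakSum.of_tendsto (𝕜 := ℂ) (x := fun _ => (0 : E)) (by simp)
  smul_mem' r p hp := by
    simpa only [Set.mem_ofPred_eq, WithLp.smul_fst, WithLp.smul_snd, lp.coeFn_smul, Pi.smul_apply, smul_eq_mul,
      mul_smul] using hp.const_smul r

theorem isClosed_synthesisGraph {Qfun : l2 → E}
    (hQ : ∀ c ∈ domQ ξ, HasWeakSum ℂ (fun n => c n • ξ n) (Qfun c))
    (hQclosed : IsClosed {p : l2 × E | p.1 ∈ domQ ξ ∧ Qfun p.1 = p.2}) :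
    IsClosed (synthesisGraph ξ : Set (WithLp 2 (l2 × E))) := by
  have hgraph : {p : l2 × E | p.1 ∈ domQ ξ ∧ Qfun p.1 = p.2}
      = {p | HasWeakSum ℂ (fun n => p.1 n • ξ n) p.2} := by
    ext p
    exact ⟨fun ⟨hp, hQp⟩ => show HasWeakSum ℂ _ _ from hQp ▸ hQ p.1 hp, fun hp => ⟨⟨p.2, hp⟩, (hQ p.1 ⟨p.2, hp⟩).unique hp⟩⟩
  rw [hgraph] at hQclosed
  exact hQclosed.preimage (WithLp.prodContinuousLinearEquiv 2 ℂ l2 E).continuous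

theorem toLp_single_mem_synthesisGraph (m : ℕ) :
    WithLp.toLp 2 (lp.single 2 m (1 : ℂ), ξ m) ∈ synthesisGraph ξ := by
  have hterms : (fun n => (lp.single 2 m (1 : ℂ) : l2) n • ξ n) = Pi.single m (ξ m) := by
    ext n
    rcases eq_or_ne n m with rfl | hn <;> simp [*]
  show HasWeakSum ℂ (fun n => (lp.single 2 m (1 : ℂ) : l2) n • ξ n) (ξ m)
  rw [hterms]
  exact .of_tendsto (hasSum_pi_single m (ξ m)).tendsto_sum_nat

theorem fst_apply_of_mem_orthogonal_synthesisGraph {u : WithLp 2 (l2 × E)}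
    (hu : u ∈ (synthesisGraph ξ)ᗮ) (m : ℕ) : u.fst m = -⟪ξ m, u.snd⟫_ℂ := by
  have h := (Submodule.mem_orthogonal _ u).mp hu _ (toLp_single_mem_synthesisGraph m)
  simp only [WithLp.prod_inner_apply, lp.inner_single_left, RCLike.inner_apply, map_one,
    mul_one] at h
  exact eq_neg_of_add_eq_zero_left h

theorem snd_mem_domC_of_mem_orthogonal_synthesisGraph {u : WithLp 2 (l2 × E)}
    (hu : u ∈ (synthesisGraph ξ)ᗮ) : u.snd ∈ domC ξ := by
  have h : (fun n => ⟪ξ n, u.snd⟫_ℂ) = ⇑(-u.fst) := by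
    ext n
    simp [fst_apply_of_mem_orthogonal_synthesisGraph hu n]
  show Memℓp _ 2
  rw [h]
  exact lp.memℓp _

theorem hasWeakSum_of_tsum_mul_inner_eq [CompleteSpace E]
    (hclosed : IsClosed (synthesisGraph ξ : Set (WithLp 2 (l2 × E)))) {f h : E} (hf : f ∈ domC ξ)
    (hh : ∀ g ∈ domC ξ, ∑' n, ⟪ξ n, f⟫_ℂ * ⟪g, ξ n⟫_ℂ = ⟪g, h⟫_ℂ) :
    HasWeakSum ℂ (fun n => ⟪ξ n, f⟫_ℂ • ξ n) h := by
  have : CompleteSpace (synthesisGraph ξ) := hclosed.completeSpace_coe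
  suffices WithLp.toLp 2 ((⟨_, hf⟩ : l2), h) ∈ synthesisGraph ξ from this
  rw [← (synthesisGraph ξ).orthogonal_orthogonal, Submodule.mem_orthogonal]
  intro u hu
  have hfst := fst_apply_of_mem_orthogonal_synthesisGraph hu
  calc ⟪u, WithLp.toLp 2 ((⟨_, hf⟩ : l2), h)⟫_ℂ
      = ∑' n, ⟪u.fst n, ⟪ξ n, f⟫_ℂ⟫_ℂ + ⟪u.snd, h⟫_ℂ := by
        rw [WithLp.prod_inner_apply, lp.inner_eq_tsum]
        rfl
    _ = -∑' n, ⟪ξ n, f⟫_ℂ * ⟪u.snd, ξ n⟫_ℂ + ⟪u.snd, h⟫_ℂ := by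
        rw [← tsum_neg]
        congr 2 with n
        rw [hfst n, RCLike.inner_apply, map_neg, inner_conj_symm]
        ring
    _ = 0 := by
        rw [hh _ (snd_mem_domC_of_mem_orthogonal_synthesisGraph hu)]
        ring

end Synthesis

section FrameSeries

variable {E : Type} [NormedAddCommGroup E] [InnerProductSpace ℂ E] {ξ : ℕ → E}

theorem re_inner_sum_inner_smul_eq_sum_norm_sq (f : E) (k : ℕ) :
    (⟪f, ∑ n ∈ Finset.range k, ⟪ξ n, f⟫_ℂ • ξ n⟫_ℂ).re = ∑ n ∈ Finset.range k, ‖⟪ξ n, f⟫_ℂ‖ ^ 2 := by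
  rw [inner_sum, Complex.re_sum]
  refine Finset.sum_congr rfl fun n _ => ?_
  rw [inner_smul_right, ← inner_conj_symm f, Complex.mul_conj']
  norm_cast

theorem mem_domC_of_hasWeakSum {f L : E} (h : HasWeakSum ℂ (fun n => ⟪ξ n, f⟫_ℂ • ξ n) L) :
    f ∈ domC ξ := by
  have hsum : HasSum (fun n => ‖⟪ξ n, f⟫_ℂ‖ ^ 2) (⟪f, L⟫_ℂ).re := by
    rw [hasSum_iff_tendsto_nat_of_nonneg fun n => sq_nonneg _]
    simpa only [Function.comp_def, re_inner_sum_inner_smul_eq_sum_norm_sq] using (Complex.continuous_re.tendsto _).comp (h f)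
  exact memℓp_gen (by simpa using hsum.summable)

theorem summable_mul_inner {f g : E} (hf : f ∈ domC ξ) (hg : g ∈ domC ξ) :
    Summable fun n => ⟪ξ n, f⟫_ℂ * ⟪g, ξ n⟫_ℂ := by
  refine (lp.summable_inner (𝕜 := ℂ) (⟨_, hg⟩ : l2) ⟨_, hf⟩).congr fun n => ?_
  change ⟪⟪ξ n, g⟫_ℂ, ⟪ξ n, f⟫_ℂ⟫_ℂ = _
  rw [RCLike.inner_apply, inner_conj_symm, mul_comm]

theorem tsum_mul_inner_eq_of_hasWeakSum {f g L : E} (hf : f ∈ domC ξ) (hg : g ∈ domC ξ)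
    (h : HasWeakSum ℂ (fun n => ⟪ξ n, f⟫_ℂ • ξ n) L) :
    ∑' n, ⟪ξ n, f⟫_ℂ * ⟪g, ξ n⟫_ℂ = ⟪g, L⟫_ℂ := by
  refine tendsto_nhds_unique (summable_mul_inner hf hg).hasSum.tendsto_sum_nat ?_
  simpa only [inner_sum, inner_smul_right] using h g

theorem domW_subset_domT (hdense : Dense (domC ξ)) : domW ξ ⊆ domT ξ := by
  rintro f ⟨L, hL⟩
  have hf : f ∈ domC ξ := mem_domC_of_hasWeakSum hL
  exact ⟨hf, L, hdense.closure_eq ▸ Set.mem_univ L,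
    fun g hg => tsum_mul_inner_eq_of_hasWeakSum hf hg hL⟩

end FrameSeries

/-- Let `ξ` be a sequence in `H` with `D(C_ξ)` dense.  If the operator `Q_ξ`
is closed, then `T_ξ = W_ξ` (equality of domains included). -/
theorem statement9 (ξ : ℕ → H) (hdense : Dense (domC ξ))
    (Qfun : l2 → H)
    (hQ : ∀ c ∈ domQ ξ, ∀ y : H,
      Tendsto (fun k : ℕ => ⟪y, ∑ n ∈ Finset.range k, c n • ξ n⟫_ℂ) atTop (𝓝 ⟪y, Qfun c⟫_ℂ))
    (hQclosed : IsClosed {p : l2 × H | p.1 ∈ domQ ξ ∧ Qfun p.1 = p.2})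
    (Wfun : H → H)
    (hW : ∀ f ∈ domW ξ, ∀ y : H,
      Tendsto (fun k : ℕ => ⟪y, ∑ n ∈ Finset.range k, ⟪ξ n, f⟫_ℂ • ξ n⟫_ℂ) atTop
        (𝓝 ⟪y, Wfun f⟫_ℂ))
    (Tfun : H → H)
    (hT : ∀ f ∈ domT ξ, Tfun f ∈ closure (domC ξ) ∧
      ∀ g ∈ domC ξ, ∑' n : ℕ, ⟪ξ n, f⟫_ℂ * ⟪g, ξ n⟫_ℂ = ⟪g, Tfun f⟫_ℂ) :
    domT ξ = domW ξ ∧ ∀ f ∈ domT ξ, Tfun f = Wfun f := by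
  have hclosed := isClosed_synthesisGraph hQ hQclosed
  have hTf : ∀ f ∈ domT ξ, HasWeakSum ℂ (fun n => ⟪ξ n, f⟫_ℂ • ξ n) (Tfun f) := fun f hf =>
    hasWeakSum_of_tsum_mul_inner_eq hclosed hf.1 (hT f hf).2
  have hTW : domT ξ ⊆ domW ξ := fun f hf => ⟨Tfun f, hTf f hf⟩
  exact ⟨hTW.antisymm (domW_subset_domT hdense),
    fun f hf => (hTf f hf).unique (hW f (hTW hf))⟩
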